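/- Let R be an F_2-algebra. The strict automorphism group of the additive formal group law over R is in natural bijection with sequences (c_1, c_2, c_3, …) of elements of R, via f ↦ (coefficients of X^{2^i} in f for i ≥ 1); equivalently, the functor R ↦ Aut_strict(G_a)(R) is corepresented by the polynomial ring F_2[ξ_1, ξ_2, …]. -/

import Mathlib

noncomputable section

variable {R : Type} [CommRing R]

/-- Substitution of the variables of a multivariate power series by power series
(intended for series with zero constant coefficient, where it computes `F(a 0, a 1, ...)`). -/
def msubst {σ τ : Type} [Fintype σ] [DecidableEq σ] (F : MvPowerSeries σ R)
    (a : σ → MvPowerSeries τ R) : MvPowerSeries τ R :=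
  fun d => MvPowerSeries.coeff d
    (∑ e ∈ Finset.Iic (Finsupp.equivFunOnFinite.symm fun _ => d.sum fun _ n => n),
      MvPowerSeries.coeff e F • ∏ i, a i ^ e i)

/-- Substitution of the single variable of a one-variable power series: `f(a)`. -/
def psubst {τ : Type} (f : PowerSeries R) (a : MvPowerSeries τ R) : MvPowerSeries τ R :=
  msubst f (fun _ => a)

/-- Composition of one-variable power series, `pcomp f g = f(g(X))`. -/
def pcomp (f g : PowerSeries R) : PowerSeries R := psubst f g

/-- `f(F(X,Y)) = G(f(X), f(Y))` : `f` is a homomorphism of formal group laws `F → G`. -/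
def IsFGLHom (F G : MvPowerSeries (Fin 2) R) (f : PowerSeries R) : Prop :=
  psubst f F = msubst G
    ![psubst f (MvPowerSeries.X 0 : MvPowerSeries (Fin 2) R),
      psubst f (MvPowerSeries.X 1 : MvPowerSeries (Fin 2) R)]

/-- `F` is a commutative one-dimensional formal group law:
`F(X,0) = X`, `F(0,Y) = Y`, `F(F(X,Y),Z) = F(X,F(Y,Z))` and `F(X,Y) = F(Y,X)`. -/
def IsFGL (F : MvPowerSeries (Fin 2) R) : Prop :=
  msubst F ![(MvPowerSeries.X 0 : MvPowerSeries (Fin 2) R), 0] = MvPowerSeries.X 0 ∧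
  msubst F ![(0 : MvPowerSeries (Fin 2) R), MvPowerSeries.X 1] = MvPowerSeries.X 1 ∧
  msubst F ![msubst F ![(MvPowerSeries.X 0 : MvPowerSeries (Fin 3) R),
      MvPowerSeries.X 1], MvPowerSeries.X 2]
    = msubst F ![(MvPowerSeries.X 0 : MvPowerSeries (Fin 3) R),
        msubst F ![(MvPowerSeries.X 1 : MvPowerSeries (Fin 3) R), MvPowerSeries.X 2]] ∧
  msubst F ![(MvPowerSeries.X 1 : MvPowerSeries (Fin 2) R), MvPowerSeries.X 0] = F

/-- the additive formal group law `X + Y` -/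
def addFGL : MvPowerSeries (Fin 2) R := MvPowerSeries.X 0 + MvPowerSeries.X 1

/-- `f(X+Y) = f(X) + f(Y)` as two-variable power series. -/
def IsAdditive (f : PowerSeries R) : Prop :=
  psubst f (MvPowerSeries.X 0 + MvPowerSeries.X 1 : MvPowerSeries (Fin 2) R)
    = psubst f (MvPowerSeries.X 0 : MvPowerSeries (Fin 2) R)
      + psubst f (MvPowerSeries.X 1 : MvPowerSeries (Fin 2) R)

open Nat in
lemma pow_of_all_choose_even : ∀ n, 2 ≤ n → (∀ k, 0 < k → k < n → 2 ∣ n.choose k) →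
    ∃ m, n = 2 ^ m := by
  intro n
  induction n using Nat.strong_induction_on with
  | _ n ih =>
    intro hn h
    rcases Nat.even_or_odd n with he | ho
    · obtain ⟨m, rfl⟩ := he
      have hm : 1 ≤ m := by omega
      rcases eq_or_lt_of_le hm with rfl | hm2
      · exact ⟨1, rfl⟩
      · have key : ∀ j, 0 < j → j < m → 2 ∣ m.choose j := by
          intro j hj hjm
          have hmod : (m + m).choose (j + j) ≡ ((m+m) % 2).choose ((j+j) % 2) *
              ((m+m)/2).choose ((j+j)/2) [MOD 2] :=
            Choose.choose_modEq_choose_mod_mul_choose_div_nat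
          have h1 : (m + m) % 2 = 0 := by omega
          have h2 : (j + j) % 2 = 0 := by omega
          have h3 : (m + m) / 2 = m := by omega
          have h4 : (j + j) / 2 = j := by omega
          rw [h1, h2, h3, h4, Nat.choose_zero_right, one_mul] at hmod
          have hd := h (j + j) (by omega) (by omega)
          obtain ⟨c, hc⟩ := hd
          have h5 : (m+m).choose (j+j) % 2 = 0 := by omega
          unfold Nat.ModEq at hmod
          exact Nat.dvd_of_mod_eq_zero (hmod ▸ h5)
        obtain ⟨t, ht⟩ := ih m (by omega) (by omega) key
        exact ⟨t + 1, by rw [ht]; ring⟩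
    · exfalso
      have := h 1 one_pos (by omega)
      rw [Nat.choose_one_right] at this
      obtain ⟨c, rfl⟩ := ho
      omega
lemma coeff_psubst {τ : Type} (f : PowerSeries R) (a : MvPowerSeries τ R) (d : τ →₀ ℕ) :
    MvPowerSeries.coeff d (psubst f a)
      = ∑ n ∈ Finset.range ((d.sum fun _ n => n) + 1),
          PowerSeries.coeff n f * MvPowerSeries.coeff d (a ^ n) := by
  have h0 : MvPowerSeries.coeff d (psubst f a) = MvPowerSeries.coeff d
      (∑ e ∈ Finset.Iic (Finsupp.equivFunOnFinite.symm fun _ => d.sum fun _ n => n),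
        MvPowerSeries.coeff e f • ∏ _i : Unit, a ^ e _i) := rfl
  rw [h0, map_sum]
  refine Finset.sum_nbij' (fun e => e ()) (fun n => Finsupp.single () n) ?_ ?_ ?_ ?_ ?_
  · intro e he
    simp only [Finset.mem_Iic, Finsupp.le_def] at he
    have := he ()
    simp [Finsupp.equivFunOnFinite] at this
    simp [Finset.mem_range]
    omega
  · intro n hn
    simp only [Finset.mem_range] at hn
    simp only [Finset.mem_Iic, Finsupp.le_def]
    intro s
    simp [Finsupp.equivFunOnFinite]
    change _ ≤ (d.sum fun _ n => n)
    omega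
  · intro e _
    exact (Finsupp.unique_single e).symm
  · intro n _
    simp
  · intro e _
    rw [map_smul, smul_eq_mul, Fintype.prod_unique]
    congr 1
    rw [PowerSeries.coeff]
    have he2 : e = Finsupp.single () (e ()) := Finsupp.unique_single e
    conv_lhs => rw [he2]

lemma fin2_sum (d : Fin 2 →₀ ℕ) : (d.sum fun _ n => n) = d 0 + d 1 := by
  rw [Finsupp.sum_fintype _ _ (fun _ => rfl), Fin.sum_univ_two]

lemma fin2_eq_iff (d : Fin 2 →₀ ℕ) (k m : ℕ) :
    d = Finsupp.single 0 k + Finsupp.single 1 m ↔ d 0 = k ∧ d 1 = m := by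
  constructor
  · rintro rfl
    simp [Finsupp.single_apply]
  · rintro ⟨h0, h1⟩
    ext x
    fin_cases x <;> simp [Finsupp.single_apply, ← h0, ← h1]

lemma coeff_addpow (n : ℕ) (d : Fin 2 →₀ ℕ) :
    MvPowerSeries.coeff d
      ((MvPowerSeries.X 0 + MvPowerSeries.X 1 : MvPowerSeries (Fin 2) R) ^ n)
      = if d 0 + d 1 = n then (n.choose (d 0) : R) else 0 := by
  rw [add_pow, map_sum]
  have hterm : ∀ k, MvPowerSeries.coeff d
      ((MvPowerSeries.X 0 : MvPowerSeries (Fin 2) R) ^ k * MvPowerSeries.X 1 ^ (n - k)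
        * ((n.choose k : ℕ) : MvPowerSeries (Fin 2) R))
      = if d 0 = k ∧ d 1 = n - k then (n.choose k : R) else 0 := by
    intro k
    rw [MvPowerSeries.X_pow_eq, MvPowerSeries.X_pow_eq, MvPowerSeries.monomial_mul_monomial,
      one_mul]
    rw [show ((n.choose k : ℕ) : MvPowerSeries (Fin 2) R)
        = MvPowerSeries.C ((n.choose k : ℕ) : R) from
        (map_natCast (MvPowerSeries.C) _).symm, MvPowerSeries.coeff_mul_C, MvPowerSeries.coeff_monomial]
    simp only [fin2_eq_iff]
    split <;> simp
  rw [Finset.sum_congr rfl (fun k _ => hterm k)]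
  split
  · next h =>
    rw [Finset.sum_eq_single_of_mem (d 0) (by simp [Finset.mem_range]; omega)]
    · rw [if_pos ⟨rfl, by omega⟩]
    · intro k _ hk
      rw [if_neg]
      rintro ⟨rfl, -⟩
      exact hk rfl
  · next h =>
    apply Finset.sum_eq_zero
    intro k hk
    simp only [Finset.mem_range] at hk
    rw [if_neg]
    rintro ⟨rfl, h1⟩
    omega

lemma coeff_psubst_X (i : Fin 2) (f : PowerSeries R) (d : Fin 2 →₀ ℕ) :
    MvPowerSeries.coeff d (psubst f (MvPowerSeries.X i : MvPowerSeries (Fin 2) R))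
      = if d = Finsupp.single i (d i) then PowerSeries.coeff (d i) f else 0 := by
  rw [coeff_psubst]
  have hterm : ∀ n, PowerSeries.coeff n f
      * MvPowerSeries.coeff d ((MvPowerSeries.X i : MvPowerSeries (Fin 2) R) ^ n)
      = if d = Finsupp.single i n then PowerSeries.coeff n f else 0 := by
    intro n
    rw [MvPowerSeries.coeff_X_pow]
    split <;> simp
  rw [Finset.sum_congr rfl (fun n _ => hterm n)]
  have hdi : d i ≤ (d.sum fun _ n => n) := by
    rw [fin2_sum]; fin_cases i <;> simp
  split
  · next h =>
    rw [Finset.sum_eq_single_of_mem (d i) (by simp [Finset.mem_range]; omega)]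
    · rw [if_pos h]
    · intro n _ hn
      rw [if_neg]
      intro hd
      exact hn (by rw [hd, Finsupp.single_eq_same])
  · next h =>
    apply Finset.sum_eq_zero
    intro n hn
    rw [if_neg]
    intro hd
    exact h (by rw [hd, Finsupp.single_eq_same])

lemma coeff_psubst_addXY (f : PowerSeries R) (d : Fin 2 →₀ ℕ) :
    MvPowerSeries.coeff d
      (psubst f (MvPowerSeries.X 0 + MvPowerSeries.X 1 : MvPowerSeries (Fin 2) R))
      = PowerSeries.coeff (d 0 + d 1) f * ((d 0 + d 1).choose (d 0) : R) := by
  rw [coeff_psubst]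
  have hterm : ∀ n, PowerSeries.coeff n f * MvPowerSeries.coeff d
      ((MvPowerSeries.X 0 + MvPowerSeries.X 1 : MvPowerSeries (Fin 2) R) ^ n)
      = if d 0 + d 1 = n then PowerSeries.coeff n f * ((d 0 + d 1).choose (d 0) : R)
        else 0 := by
    intro n
    rw [coeff_addpow]
    split
    · next h => rw [h]
    · simp
  rw [Finset.sum_congr rfl (fun n _ => hterm n)]
  rw [Finset.sum_eq_single_of_mem (d 0 + d 1) (by simp [Finset.mem_range, fin2_sum])]
  · rw [if_pos rfl]
  · intro n _ hn
    exact if_neg (fun h => hn h.symm)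

lemma isAdditive_iff (f : PowerSeries R) (hf0 : PowerSeries.constantCoeff f = 0) :
    IsAdditive f ↔ ∀ n k : ℕ, 0 < k → k < n →
      (n.choose k : R) * PowerSeries.coeff n f = 0 := by
  rw [IsAdditive, MvPowerSeries.ext_iff]
  constructor
  · intro H n k hk hkn
    have := H (Finsupp.single 0 k + Finsupp.single 1 (n - k))
    rw [coeff_psubst_addXY, map_add, coeff_psubst_X, coeff_psubst_X] at this
    have e0 : (Finsupp.single 0 k + Finsupp.single 1 (n - k) : Fin 2 →₀ ℕ) 0 = k := by
      simp [Finsupp.single_apply]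
    have e1 : (Finsupp.single 0 k + Finsupp.single 1 (n - k) : Fin 2 →₀ ℕ) 1 = n - k := by
      simp [Finsupp.single_apply]
    rw [e0, e1] at this
    rw [if_neg, if_neg, add_zero] at this
    · rw [show k + (n - k) = n by omega] at this
      rw [mul_comm] at this
      exact this
    · intro h
      have := DFunLike.congr_fun h 0
      simp [Finsupp.single_apply] at this
      omega
    · intro h
      have := DFunLike.congr_fun h 1
      simp [Finsupp.single_apply] at this
      omega
  · intro H d
    rw [coeff_psubst_addXY, map_add, coeff_psubst_X, coeff_psubst_X]
    rcases Nat.eq_zero_or_pos (d 0) with h0 | h0 <;>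
      rcases Nat.eq_zero_or_pos (d 1) with h1 | h1
    · have hd : d = 0 := by ext x; fin_cases x <;> simp [h0, h1]
      rw [if_pos, if_pos]
      · rw [← PowerSeries.coeff_zero_eq_constantCoeff] at hf0
        simp [h0, h1, hf0]
      · rw [hd]; simp
      · rw [hd]; simp
    · -- d 0 = 0, d 1 > 0
      rw [if_neg, if_pos]
      · simp [h0, Nat.choose_zero_right]
      · ext x; fin_cases x <;> simp [Finsupp.single_apply, h0]
      · intro h
        have := DFunLike.congr_fun h 1
        simp [Finsupp.single_apply] at this
        omega
    · -- d 0 > 0, d 1 = 0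
      rw [if_pos, if_neg]
      · simp [h1, Nat.choose_self]
      · intro h
        have := DFunLike.congr_fun h 0
        simp [Finsupp.single_apply] at this
        omega
      · ext x; fin_cases x <;> simp [Finsupp.single_apply, h1]
    · rw [if_neg, if_neg]
      · rw [mul_comm, H (d 0 + d 1) (d 0) h0 (by omega), add_zero]
      · intro h
        have := DFunLike.congr_fun h 0
        simp [Finsupp.single_apply] at this
        omega
      · intro h
        have := DFunLike.congr_fun h 1
        simp [Finsupp.single_apply] at this
        omega

lemma charTwo_natCast_eq_zero (R : Type) [CommRing R] [CharP R 2] {m : ℕ} (h : 2 ∣ m) :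
    (m : R) = 0 :=
  (CharP.cast_eq_zero_iff R 2 m).mpr h

lemma charTwo_natCast_odd (R : Type) [CommRing R] [CharP R 2] {m : ℕ} (h : ¬ 2 ∣ m) :
    (m : R) = 1 := by
  obtain ⟨q, hq⟩ : ∃ q, m = 2 * q + 1 := ⟨m / 2, by omega⟩
  subst hq
  push_cast
  have h2 : (2 : R) = 0 := by exact_mod_cast CharP.cast_eq_zero R 2
  rw [h2]
  ring

lemma coeff_eq_zero_of_not_pow {R : Type} [CommRing R] [CharP R 2] (f : PowerSeries R)
    (hadd : ∀ n k : ℕ, 0 < k → k < n → (n.choose k : R) * PowerSeries.coeff n f = 0)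
    {n : ℕ} (h2 : 2 ≤ n) (hnp : ¬∃ m, n = 2 ^ m) : PowerSeries.coeff n f = 0 := by
  have hx : ¬ (∀ k, 0 < k → k < n → 2 ∣ n.choose k) := fun h => hnp (pow_of_all_choose_even n h2 h)
  push_neg at hx
  obtain ⟨k, hk, hkn, hodd⟩ := hx
  calc PowerSeries.coeff n f = (n.choose k : R) * PowerSeries.coeff n f := by
        rw [charTwo_natCast_odd R hodd, one_mul]
    _ = 0 := hadd n k hk hkn

/-- over an `F₂`-algebra `R`, the strict automorphisms of the additive
formal group law are in bijection with sequences `(c_1, c_2, ...)` of elements of `R`,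
via `f ↦ (coefficient of X^(2^i) in f)_{i ≥ 1}`. -/
theorem stmt10 (R : Type) [CommRing R] [CharP R 2] :
    Function.Bijective
      (fun f : {f : PowerSeries R // PowerSeries.constantCoeff f = 0 ∧
          PowerSeries.coeff 1 f = 1 ∧ IsAdditive f} =>
        fun i : ℕ => PowerSeries.coeff (2 ^ (i + 1)) f.val) := by
  constructor
  · rintro ⟨f, hf0, hf1, hfa⟩ ⟨g, hg0, hg1, hga⟩ h
    simp only at h
    apply Subtype.ext
    ext n
    rcases Nat.lt_or_ge n 2 with h2 | h2
    · interval_cases n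
      · rw [PowerSeries.coeff_zero_eq_constantCoeff, hf0, hg0]
      · rw [hf1, hg1]
    · by_cases hp : ∃ m, n = 2 ^ m
      · obtain ⟨m, rfl⟩ := hp
        have hm : 1 ≤ m := by
          by_contra hm
          interval_cases m <;> omega
        have h' := congrFun h (m - 1)
        rw [show m = m - 1 + 1 by omega]
        exact h'
      · rw [coeff_eq_zero_of_not_pow f ((isAdditive_iff f hf0).mp hfa) h2 hp,
          coeff_eq_zero_of_not_pow g ((isAdditive_iff g hg0).mp hga) h2 hp]
  · intro c
    set g : PowerSeries R := PowerSeries.mk fun n =>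
      if n = 1 then 1 else if n = 2 ^ Nat.log 2 n then c (Nat.log 2 n - 1) else 0 with hgdef
    have hg0 : PowerSeries.constantCoeff g = 0 := by
      rw [← PowerSeries.coeff_zero_eq_constantCoeff]
      simp [hgdef, PowerSeries.coeff_mk]
    have hg1 : PowerSeries.coeff 1 g = 1 := by
      simp [hgdef, PowerSeries.coeff_mk]
    have hga : IsAdditive g := by
      rw [isAdditive_iff g hg0]
      intro n k hk hkn
      by_cases h1 : n = 1
      · omega
      by_cases h2 : n = 2 ^ Nat.log 2 n
      · have hdvd : 2 ∣ n.choose k := by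
          rw [h2]
          exact Nat.Prime.dvd_choose_pow Nat.prime_two (by omega) (by rw [← h2]; omega)
        rw [charTwo_natCast_eq_zero R hdvd, zero_mul]
      · have : PowerSeries.coeff n g = 0 := by
          simp [hgdef, PowerSeries.coeff_mk, h1, h2]
        rw [this, mul_zero]
    refine ⟨⟨g, hg0, hg1, hga⟩, ?_⟩
    funext i
    simp only [hgdef, PowerSeries.coeff_mk]
    rw [if_neg, if_pos]
    · rw [Nat.log_pow (by norm_num)]
      simp
    · rw [Nat.log_pow (by norm_num)]
    · have := Nat.one_lt_two_pow (n := i + 1) (by omega)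
      omega
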